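/- Let d(n) = ⌊nφ³⌋. For every positive integer n: if {nφ} > 1/2 then {d(n)·φ} lies in the open interval ((3 − √5)/2, 1/2), and if {nφ} < 1/2 then {d(n)·φ} lies in the open interval ((4 − √5)/2, 1). -/

import Mathlib

noncomputable def φ : ℝ := (1 + Real.sqrt 5) / 2
noncomputable def d (n : ℕ) : ℤ := ⌊(n : ℝ) * φ ^ 3⌋

/-! Write nφ = m + f with m = ⌊nφ⌋ and f = {nφ}. Since φ³ = 2φ + 1, d(n) = n + ⌊2nφ⌋ = n + 2m + ⌊2f⌋,
and φ² = φ + 1 makes (n + 2m)φ equal to the integer 2n + 3m minus f(√5 - 2). Hence {d(n)φ} is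
(√5 - 1)/2 - f(√5 - 2) when f > 1/2 and 1 - f(√5 - 2) when f < 1/2 (f > 0 because φ is irrational);
as 0 < √5 - 2 < 1, these land in the two intervals. -/

open Real Int

lemma two_lt_sqrt_five : 2 < √5 := by
  rw [lt_sqrt zero_le_two]; norm_num

lemma sqrt_five_lt_three : √5 < 3 := by
  rw [sqrt_lt' three_pos]; norm_num

lemma φ_sq : φ ^ 2 = φ + 1 := goldenRatio_sq

lemma φ_cube : φ ^ 3 = 2 * φ + 1 := by
  linear_combination (φ + 1) * φ_sq

lemma fract_natCast_mul_φ_pos {n : ℕ} (hn : 0 < n) : 0 < fract ((n : ℝ) * φ) :=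
  fract_pos.mpr ((goldenRatio_irrational.natCast_mul hn.ne').ne_int _)

section FloorTwoMul

variable {R : Type*} [Field R] [LinearOrder R] [IsStrictOrderedRing R] [FloorRing R] {x : R}

lemma floor_two_mul_of_half_lt_fract (h : 1 / 2 < fract x) : ⌊2 * x⌋ = 2 * ⌊x⌋ + 1 := by
  rw [floor_eq_iff]
  have hx := floor_add_fract x
  have := fract_lt_one x
  push_cast
  constructor <;> linarith

lemma floor_two_mul_of_fract_lt_half (h : fract x < 1 / 2) : ⌊2 * x⌋ = 2 * ⌊x⌋ := by
  rw [floor_eq_iff]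
  have hx := floor_add_fract x
  have := fract_nonneg x
  push_cast
  constructor <;> linarith

end FloorTwoMul

lemma d_eq_add_floor_two_mul (n : ℕ) : d n = n + ⌊2 * ((n : ℝ) * φ)⌋ := by
  rw [d, φ_cube, ← floor_intCast_add]
  push_cast
  ring_nf

lemma add_two_floor_mul_φ (n : ℕ) :
    ((n + 2 * ⌊(n : ℝ) * φ⌋ : ℤ) : ℝ) * φ =
      ((2 * n + 3 * ⌊(n : ℝ) * φ⌋ : ℤ) : ℝ) - fract ((n : ℝ) * φ) * (√5 - 2) := by
  have hm : (⌊(n : ℝ) * φ⌋ : ℝ) = n * φ - fract ((n : ℝ) * φ) := by rw [self_sub_fract]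
  have hφ : √5 = 2 * φ - 1 := by rw [φ]; ring
  push_cast
  rw [hm, hφ]
  linear_combination 2 * (n : ℝ) * φ_sq

lemma fract_d_mul_φ_of_half_lt {n : ℕ} (h : 1 / 2 < fract ((n : ℝ) * φ)) :
    fract ((d n : ℝ) * φ) = (√5 - 1) / 2 - fract ((n : ℝ) * φ) * (√5 - 2) := by
  have hd : d n = n + 2 * ⌊(n : ℝ) * φ⌋ + 1 := by
    rw [d_eq_add_floor_two_mul, floor_two_mul_of_half_lt_fract h]
    ring
  have hf := fract_lt_one ((n : ℝ) * φ)
  have := two_lt_sqrt_five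
  have := sqrt_five_lt_three
  rw [fract_eq_iff]
  refine ⟨by nlinarith, by nlinarith, 2 * n + 3 * ⌊(n : ℝ) * φ⌋ + 1, ?_⟩
  rw [hd, cast_add, add_mul, add_two_floor_mul_φ]
  push_cast
  rw [φ]
  ring

lemma fract_d_mul_φ_of_lt_half {n : ℕ} (h₀ : 0 < fract ((n : ℝ) * φ))
    (h : fract ((n : ℝ) * φ) < 1 / 2) :
    fract ((d n : ℝ) * φ) = 1 - fract ((n : ℝ) * φ) * (√5 - 2) := by
  have hd : d n = n + 2 * ⌊(n : ℝ) * φ⌋ := by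
    rw [d_eq_add_floor_two_mul, floor_two_mul_of_fract_lt_half h]
  have := two_lt_sqrt_five
  have := sqrt_five_lt_three
  rw [fract_eq_iff]
  refine ⟨by nlinarith, by nlinarith, 2 * n + 3 * ⌊(n : ℝ) * φ⌋ - 1, ?_⟩
  rw [hd, add_two_floor_mul_φ]
  push_cast
  ring

theorem fract_d_phi_intervals (n : ℕ) (hn : 0 < n) :
    (Int.fract ((n : ℝ) * φ) > 1 / 2 →
      Int.fract ((d n : ℝ) * φ) ∈ Set.Ioo ((3 - Real.sqrt 5) / 2) (1 / 2)) ∧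
    (Int.fract ((n : ℝ) * φ) < 1 / 2 →
      Int.fract ((d n : ℝ) * φ) ∈ Set.Ioo ((4 - Real.sqrt 5) / 2) 1) := by
  have hf₀ := fract_natCast_mul_φ_pos hn
  have hf₁ := fract_lt_one ((n : ℝ) * φ)
  have hψ : 0 < √5 - 2 := sub_pos.mpr two_lt_sqrt_five
  refine ⟨fun h => ?_, fun h => ?_⟩
  · rw [fract_d_mul_φ_of_half_lt h]
    constructor <;> nlinarith
  · rw [fract_d_mul_φ_of_lt_half hf₀ h]
    constructor <;> nlinarith
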